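/- arXiv:1207.1029 — 4 statements merged into one kernel-verified Lean document; each statement's English description precedes it below -/
import Mathlib

section
/- Let Σ be a k×k symmetric positive definite matrix, μ ∈ ℝ^k, μ̃ = 𝟏 + μ, A = Σ + μ̃μ̃', R_GMV = (𝟏'Σ⁻¹μ)/(𝟏'Σ⁻¹𝟏), s = μ'Qμ, Q = Σ⁻¹ - (Σ⁻¹𝟏𝟏'Σ⁻¹)/(𝟏'Σ⁻¹𝟏). Then for any α̃ > 0, the vector w = A⁻¹𝟏/(𝟏'A⁻¹𝟏) + α̃⁻¹(A⁻¹ - (A⁻¹𝟏𝟏'A⁻¹)/(𝟏'A⁻¹𝟏))μ̃ satisfies w = Σ⁻¹𝟏/(𝟏'Σ⁻¹𝟏) + ((α̃⁻¹ - 1 - R_GMV)/(1 + s)) Qμ. -/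
/-!
Write `u = e + μ`, `a = eᵀΣ⁻¹e`, `R = eᵀΣ⁻¹μ / a`, `s = μᵀQμ` and, for a weight `c` (here `α⁻¹`),
`w(M, v, c) = M⁻¹e / (eᵀM⁻¹e) + c Q_M v`. Since `Q_M e = 0` and `M Q_M v ∈ v + ℝe`, the vector
`w(M, v, c)` satisfies `eᵀw = 1` and `M w ∈ c v + ℝe`, and for positive definite `M` it is the only
such vector: a difference `x` of two of them has `eᵀx = 0` and `M x ∈ ℝe`, so `xᵀMx = 0`.

For `w' = w(Σ, μ, t)` we get `uᵀw' = 1 + R + t s`, so `A w' = Σ w' + (uᵀw') u` lies in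
`(t (1 + s) + 1 + R) u + ℝe`; with `t = (c - 1 - R) / (1 + s)` this is `c u + ℝe`, whence
`w(A, u, c) = w'`. The division is legitimate because `s = xᵀΣ⁻¹x ≥ 0` for `x = μ - R e`.
-/

open Matrix

namespace Matrix

variable {n : Type*} [Fintype n] {M : Matrix n n ℝ} {e v w : n → ℝ} {c : ℝ}

lemma PosDef.eq_zero_of_mulVec_eq_smul (hM : M.PosDef) {x : n → ℝ} {l : ℝ}
    (hx : e ⬝ᵥ x = 0) (hMx : M *ᵥ x = l • e) : x = 0 := by
  by_contra hx0
  have hpos := hM.dotProduct_mulVec_pos hx0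
  rw [star_trivial, hMx, dotProduct_smul, dotProduct_comm, hx, smul_zero] at hpos
  exact lt_irrefl 0 hpos

variable [DecidableEq n]

lemma PosDef.dotProduct_inv_mulVec_self_pos (hM : M.PosDef) (he : e ≠ 0) :
    0 < e ⬝ᵥ M⁻¹ *ᵥ e := by
  simpa using hM.inv.dotProduct_mulVec_pos he

/-- The matrix `Q` of the paper when `M = Σ` and `e = 𝟏`. -/
noncomputable def constrainedInv (M : Matrix n n ℝ) (e : n → ℝ) : Matrix n n ℝ :=
  M⁻¹ - (e ⬝ᵥ M⁻¹ *ᵥ e)⁻¹ • vecMulVec (M⁻¹ *ᵥ e) (e ᵥ* M⁻¹)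

/-- The maximiser of `c • (w ⬝ᵥ v) - (w ⬝ᵥ M *ᵥ w) / 2` subject to `e ⬝ᵥ w = 1`. -/
noncomputable def quadUtilityWeights (M : Matrix n n ℝ) (e v : n → ℝ) (c : ℝ) : n → ℝ :=
  (e ⬝ᵥ M⁻¹ *ᵥ e)⁻¹ • (M⁻¹ *ᵥ e) + c • (constrainedInv M e *ᵥ v)

lemma constrainedInv_mulVec (M : Matrix n n ℝ) (e v : n → ℝ) :
    constrainedInv M e *ᵥ v =
      M⁻¹ *ᵥ (v - ((e ⬝ᵥ M⁻¹ *ᵥ v) / (e ⬝ᵥ M⁻¹ *ᵥ e)) • e) := by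
  rw [constrainedInv, sub_mulVec, smul_mulVec, vecMulVec_mulVec, op_smul_eq_smul,
    ← dotProduct_mulVec, mulVec_sub, mulVec_smul, smul_smul, inv_mul_eq_div]

lemma dotProduct_constrainedInv_mulVec_eq_zero (he : e ⬝ᵥ M⁻¹ *ᵥ e ≠ 0) (v : n → ℝ) :
    e ⬝ᵥ constrainedInv M e *ᵥ v = 0 := by
  rw [constrainedInv_mulVec, mulVec_sub, mulVec_smul, dotProduct_sub, dotProduct_smul,
    smul_eq_mul, div_mul_cancel₀ _ he, sub_self]

lemma PosSemidef.dotProduct_constrainedInv_mulVec_nonneg (hM : M.PosSemidef) (e v : n → ℝ) :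
    0 ≤ v ⬝ᵥ constrainedInv M e *ᵥ v := by
  set r := (e ⬝ᵥ M⁻¹ *ᵥ v) / (e ⬝ᵥ M⁻¹ *ᵥ e)
  have hx := hM.inv.dotProduct_mulVec_nonneg (v - r • e)
  rw [star_trivial] at hx
  -- `v - r • e` is `M⁻¹`-orthogonal to `e` (or `r = 0`), so it may replace `v` on the left
  suffices v ⬝ᵥ constrainedInv M e *ᵥ v = (v - r • e) ⬝ᵥ M⁻¹ *ᵥ (v - r • e) from this ▸ hx
  by_cases he : e ⬝ᵥ M⁻¹ *ᵥ e = 0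
  · simp [constrainedInv_mulVec, r, he]
  · have h0 := dotProduct_constrainedInv_mulVec_eq_zero he v
    rw [constrainedInv_mulVec] at h0 ⊢
    rw [sub_dotProduct, smul_dotProduct, h0, smul_zero, sub_zero]

lemma dotProduct_quadUtilityWeights (he : e ⬝ᵥ M⁻¹ *ᵥ e ≠ 0) (v : n → ℝ) (c : ℝ) :
    e ⬝ᵥ quadUtilityWeights M e v c = 1 := by
  rw [quadUtilityWeights, dotProduct_add, dotProduct_smul, dotProduct_smul,
    dotProduct_constrainedInv_mulVec_eq_zero he, smul_eq_mul, inv_mul_cancel₀ he, smul_zero,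
    add_zero]

lemma mulVec_quadUtilityWeights (hM : IsUnit M.det) (e v : n → ℝ) (c : ℝ) :
    M *ᵥ quadUtilityWeights M e v c =
      c • v + ((e ⬝ᵥ M⁻¹ *ᵥ e)⁻¹ - c * ((e ⬝ᵥ M⁻¹ *ᵥ v) / (e ⬝ᵥ M⁻¹ *ᵥ e))) • e := by
  have hMM (x : n → ℝ) : M *ᵥ (M⁻¹ *ᵥ x) = x := by
    rw [mulVec_mulVec, mul_nonsing_inv _ hM, one_mulVec]
  rw [quadUtilityWeights, constrainedInv_mulVec, mulVec_add, mulVec_smul, mulVec_smul, hMM, hMM]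
  module

lemma PosDef.eq_quadUtilityWeights (hM : M.PosDef) (he : e ≠ 0) {l : ℝ}
    (hw : e ⬝ᵥ w = 1) (hMw : M *ᵥ w = c • v + l • e) : w = quadUtilityWeights M e v c := by
  have ha := (hM.dotProduct_inv_mulVec_self_pos he).ne'
  rw [← sub_eq_zero]
  refine hM.eq_zero_of_mulVec_eq_smul (e := e)
    (l := l - ((e ⬝ᵥ M⁻¹ *ᵥ e)⁻¹ - c * ((e ⬝ᵥ M⁻¹ *ᵥ v) / (e ⬝ᵥ M⁻¹ *ᵥ e)))) ?_ ?_
  · rw [dotProduct_sub, hw, dotProduct_quadUtilityWeights ha, sub_self]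
  · rw [mulVec_sub, hMw, mulVec_quadUtilityWeights hM.det_pos.ne'.isUnit]
    module

lemma PosDef.quadUtilityWeights_add_vecMulVec (hM : M.PosDef) (he : e ≠ 0) (v : n → ℝ) (c : ℝ) :
    quadUtilityWeights (M + vecMulVec (e + v) (e + v)) e (e + v) c =
      quadUtilityWeights M e v ((c - 1 - (e ⬝ᵥ M⁻¹ *ᵥ v) / (e ⬝ᵥ M⁻¹ *ᵥ e)) /
        (1 + v ⬝ᵥ constrainedInv M e *ᵥ v)) := by
  set R := (e ⬝ᵥ M⁻¹ *ᵥ v) / (e ⬝ᵥ M⁻¹ *ᵥ e)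
  set s := v ⬝ᵥ constrainedInv M e *ᵥ v
  set t := (c - 1 - R) / (1 + s)
  have ha := (hM.dotProduct_inv_mulVec_self_pos he).ne'
  have ht : t * (1 + s) = c - 1 - R :=
    div_mul_cancel₀ _ (by linarith [hM.posSemidef.dotProduct_constrainedInv_mulVec_nonneg e v])
  have hMinv : (M⁻¹)ᵀ = M⁻¹ := by
    simpa [IsHermitian, conjTranspose_eq_transpose_of_trivial] using hM.inv.isHermitian
  have hsymm : v ⬝ᵥ M⁻¹ *ᵥ e = e ⬝ᵥ M⁻¹ *ᵥ v := by
    conv_lhs => rw [← hMinv]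
    exact dotProduct_transpose_mulVec _ _ _
  have hvw : v ⬝ᵥ quadUtilityWeights M e v t = R + t * s := by
    rw [quadUtilityWeights, dotProduct_add, dotProduct_smul, dotProduct_smul, hsymm,
      smul_eq_mul, smul_eq_mul, inv_mul_eq_div]
  have hpsd : (vecMulVec (e + v) (e + v)).PosSemidef := by
    simpa using posSemidef_vecMulVec_self_star (e + v)
  refine (PosDef.eq_quadUtilityWeights (hM.add_posSemidef hpsd) he
    (l := (e ⬝ᵥ M⁻¹ *ᵥ e)⁻¹ - t * R + 1 + R + t * s - c)
    (dotProduct_quadUtilityWeights ha v t) ?_).symm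
  rw [add_mulVec, vecMulVec_mulVec, op_smul_eq_smul,
    mulVec_quadUtilityWeights hM.det_pos.ne'.isUnit, add_dotProduct,
    dotProduct_quadUtilityWeights ha, hvw, show c = t * (1 + s) + 1 + R by linarith]
  module

end Matrix

theorem stmt10_general {k : ℕ} (S : Matrix (Fin k) (Fin k) ℝ) (hS : S.PosDef)
    (one : Fin k → ℝ) (hone : one = fun _ => (1:ℝ))
    (μ : Fin k → ℝ) (A : Matrix (Fin k) (Fin k) ℝ)
    (hA : A = S + vecMulVec (one + μ) (one + μ))
    (Q : Matrix (Fin k) (Fin k) ℝ)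
    (hQ : Q = S⁻¹ - (one ⬝ᵥ S⁻¹ *ᵥ one)⁻¹ • vecMulVec (S⁻¹ *ᵥ one) (one ᵥ* S⁻¹))
    (R s : ℝ) (hR : R = (one ⬝ᵥ S⁻¹ *ᵥ μ) / (one ⬝ᵥ S⁻¹ *ᵥ one))
    (hs : s = μ ⬝ᵥ Q *ᵥ μ)
    (α : ℝ)
    (w : Fin k → ℝ)
    (hw : w = (one ⬝ᵥ A⁻¹ *ᵥ one)⁻¹ • (A⁻¹ *ᵥ one)
        + α⁻¹ • ((A⁻¹ - (one ⬝ᵥ A⁻¹ *ᵥ one)⁻¹ • vecMulVec (A⁻¹ *ᵥ one) (one ᵥ* A⁻¹)) *ᵥ (one + μ))) :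
    w = (one ⬝ᵥ S⁻¹ *ᵥ one)⁻¹ • (S⁻¹ *ᵥ one) + ((α⁻¹ - 1 - R) / (1 + s)) • (Q *ᵥ μ) := by
  rcases isEmpty_or_nonempty (Fin k) with hk | ⟨⟨i⟩⟩
  · exact Subsingleton.elim _ _
  have hone_ne : one ≠ 0 := fun h => one_ne_zero (congrFun (hone.symm.trans h) i)
  subst hw hA hQ hR hs
  exact hS.quadUtilityWeights_add_vecMulVec hone_ne μ α⁻¹

theorem stmt10 {k : ℕ} (S : Matrix (Fin k) (Fin k) ℝ) (hS : S.PosDef)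
    (one : Fin k → ℝ) (hone : one = fun _ => (1:ℝ))
    (μ : Fin k → ℝ) (A : Matrix (Fin k) (Fin k) ℝ)
    (hA : A = S + vecMulVec (one + μ) (one + μ))
    (Q : Matrix (Fin k) (Fin k) ℝ)
    (hQ : Q = S⁻¹ - (one ⬝ᵥ S⁻¹ *ᵥ one)⁻¹ • vecMulVec (S⁻¹ *ᵥ one) (one ᵥ* S⁻¹))
    (R s : ℝ) (hR : R = (one ⬝ᵥ S⁻¹ *ᵥ μ) / (one ⬝ᵥ S⁻¹ *ᵥ one))
    (hs : s = μ ⬝ᵥ Q *ᵥ μ)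
    (α : ℝ) (hα : 0 < α)
    (w : Fin k → ℝ)
    (hw : w = (one ⬝ᵥ A⁻¹ *ᵥ one)⁻¹ • (A⁻¹ *ᵥ one)
        + α⁻¹ • ((A⁻¹ - (one ⬝ᵥ A⁻¹ *ᵥ one)⁻¹ • vecMulVec (A⁻¹ *ᵥ one) (one ᵥ* A⁻¹)) *ᵥ (one + μ))) :
    w = (one ⬝ᵥ S⁻¹ *ᵥ one)⁻¹ • (S⁻¹ *ᵥ one) + ((α⁻¹ - 1 - R) / (1 + s)) • (Q *ᵥ μ) :=
  stmt10_general S hS one hone μ A hA Q hQ R s hR hs α w hw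
end

section
/- Let Σ be a k×k symmetric positive definite matrix, μ ∈ ℝ^k not proportional to 𝟏, and μ₀ < R_GMV = (𝟏'Σ⁻¹μ)/(𝟏'Σ⁻¹𝟏). Then the solution w_M of the Markowitz problem (minimize w'Σw subject to w'μ = μ₀, w'𝟏 = 1) is not mean-variance efficient: there exists a portfolio w with w'𝟏 = 1, w'Σw = w_M'Σw_M, and w'μ > w_M'μ. -/
/-!
On the minimum-variance frontier the portfolio with target return `t` has variance
`(a - 2 t b + t² c) / (a c - b²)`, where `a, b, c` are the Gram entries of `μ, 𝟏` for the inner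
product given by `Σ⁻¹`, and `a c - b² > 0` by the strict Cauchy–Schwarz inequality. This parabola
is symmetric about `R_GMV = b / c`, so replacing the target `μ₀ < R_GMV` by its reflection
`2 R_GMV - μ₀` keeps the variance and raises the expected return.
-/

open Matrix

namespace Matrix

variable {n : Type*} [Fintype n]

lemma IsHermitian.dotProduct_mulVec_comm {P : Matrix n n ℝ} (hP : P.IsHermitian) (u v : n → ℝ) :
    u ⬝ᵥ P *ᵥ v = v ⬝ᵥ P *ᵥ u := by
  rw [dotProduct_mulVec, ← mulVec_transpose, ← conjTranspose_eq_transpose_of_trivial, hP.eq,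
    dotProduct_comm]

lemma PosDef.dotProduct_mulVec_self_pos {P : Matrix n n ℝ} (hP : P.PosDef) {x : n → ℝ}
    (hx : x ≠ 0) : 0 < x ⬝ᵥ P *ᵥ x := by
  simpa using hP.dotProduct_mulVec_pos hx

lemma PosDef.sq_dotProduct_mulVec_lt {P : Matrix n n ℝ} (hP : P.PosDef) {u v : n → ℝ}
    (hu : u ≠ 0) (hv : ¬∃ t : ℝ, v = t • u) :
    (u ⬝ᵥ P *ᵥ v) ^ 2 < (v ⬝ᵥ P *ᵥ v) * (u ⬝ᵥ P *ᵥ u) := by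
  set a := v ⬝ᵥ P *ᵥ v
  set b := u ⬝ᵥ P *ᵥ v
  set c := u ⬝ᵥ P *ᵥ u
  have hc : 0 < c := hP.dotProduct_mulVec_self_pos hu
  have hz : c • v - b • u ≠ 0 := by
    refine fun h => hv ⟨b / c, ?_⟩
    rw [div_eq_inv_mul, mul_smul, ← sub_eq_zero.mp h, smul_smul, inv_mul_cancel₀ hc.ne', one_smul]
  have hba : v ⬝ᵥ P *ᵥ u = b := hP.isHermitian.dotProduct_mulVec_comm v u
  have hquad : (c • v - b • u) ⬝ᵥ P *ᵥ (c • v - b • u) = c * (a * c - b ^ 2) := by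
    simp only [mulVec_sub, mulVec_smul, sub_dotProduct, dotProduct_sub, smul_dotProduct,
      dotProduct_smul, smul_eq_mul, hba]
    ring
  have := hP.dotProduct_mulVec_self_pos hz
  rw [hquad] at this
  linarith [pos_of_mul_pos_right this hc.le]

end Matrix

section Frontier

variable {n : Type*} [Fintype n] [DecidableEq n] {S : Matrix n n ℝ} {u v : n → ℝ}

/-- Merton's two-fund formula for the minimum-variance portfolio `w` with `w ⬝ᵥ u = 1` and
`w ⬝ᵥ v = t`, where `a, b, c` are the Gram entries of `v, u` for the inner product given by `S⁻¹`. -/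
noncomputable def frontierPortfolio (S : Matrix n n ℝ) (u v : n → ℝ) (t : ℝ) : n → ℝ :=
  let a := v ⬝ᵥ S⁻¹ *ᵥ v
  let b := u ⬝ᵥ S⁻¹ *ᵥ v
  let c := u ⬝ᵥ S⁻¹ *ᵥ u
  ((a - t * b) / (a * c - b ^ 2)) • (S⁻¹ *ᵥ u) + ((t * c - b) / (a * c - b ^ 2)) • (S⁻¹ *ᵥ v)

lemma frontierPortfolio_dotProduct (hS : S.PosDef) (hu : u ≠ 0) (hv : ¬∃ t : ℝ, v = t • u)
    (t : ℝ) : frontierPortfolio S u v t ⬝ᵥ u = 1 ∧ frontierPortfolio S u v t ⬝ᵥ v = t := by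
  have hd := hS.inv.sq_dotProduct_mulVec_lt hu hv
  have hba : v ⬝ᵥ S⁻¹ *ᵥ u = u ⬝ᵥ S⁻¹ *ᵥ v := hS.inv.isHermitian.dotProduct_mulVec_comm v u
  simp only [frontierPortfolio, add_dotProduct, smul_dotProduct, smul_eq_mul,
    dotProduct_comm (S⁻¹ *ᵥ _), hba]
  constructor <;> field_simp [(sub_pos.mpr hd).ne'] <;> ring

lemma frontierPortfolio_variance_reflect (hS : S.PosDef) (hu : u ≠ 0)
    (hv : ¬∃ t : ℝ, v = t • u) (t : ℝ) :
    let w := frontierPortfolio S u v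
    let r := (u ⬝ᵥ S⁻¹ *ᵥ v) / (u ⬝ᵥ S⁻¹ *ᵥ u)
    w (2 * r - t) ⬝ᵥ S *ᵥ w (2 * r - t) = w t ⬝ᵥ S *ᵥ w t := by
  intro w r
  set a := v ⬝ᵥ S⁻¹ *ᵥ v
  set b := u ⬝ᵥ S⁻¹ *ᵥ v
  set c := u ⬝ᵥ S⁻¹ *ᵥ u
  have hc : 0 < c := hS.inv.dotProduct_mulVec_self_pos hu
  have hd : 0 < a * c - b ^ 2 := sub_pos.mpr (hS.inv.sq_dotProduct_mulVec_lt hu hv)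
  have hSS : ∀ x, S *ᵥ (S⁻¹ *ᵥ x) = x := fun x => by
    rw [mulVec_mulVec, mul_nonsing_inv _ ((isUnit_iff_isUnit_det S).mp hS.isUnit), one_mulVec]
  -- `S w` is a combination of `u` and `v`, so the constraints alone determine `w ⬝ᵥ S w`.
  have hvar : ∀ s, w s ⬝ᵥ S *ᵥ w s = (a - 2 * s * b + s ^ 2 * c) / (a * c - b ^ 2) := fun s => by
    obtain ⟨hwu, hwv⟩ := frontierPortfolio_dotProduct hS hu hv s
    have hSw : S *ᵥ w s = ((a - s * b) / (a * c - b ^ 2)) • u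
        + ((s * c - b) / (a * c - b ^ 2)) • v := by
      simp only [w, frontierPortfolio, mulVec_add, mulVec_smul, hSS]
      rfl
    rw [hSw, dotProduct_add, dotProduct_smul, dotProduct_smul, hwu, hwv, smul_eq_mul,
      smul_eq_mul, mul_one, div_mul_eq_mul_div, ← add_div]
    ring
  rw [hvar, hvar, show r = b / c from rfl]
  field_simp
  ring

end Frontier

theorem stmt14 {k : ℕ} (S : Matrix (Fin k) (Fin k) ℝ) (hS : S.PosDef)
    (one : Fin k → ℝ) (hone : one = fun _ => (1:ℝ))
    (μ : Fin k → ℝ) (hμ : ¬ ∃ t : ℝ, μ = t • one) (μ0 : ℝ)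
    (Rg : ℝ) (hRg : Rg = (one ⬝ᵥ S⁻¹ *ᵥ μ) / (one ⬝ᵥ S⁻¹ *ᵥ one))
    (hμ0 : μ0 < Rg)
    (a b c : ℝ) (ha : a = μ ⬝ᵥ S⁻¹ *ᵥ μ) (hb : b = one ⬝ᵥ S⁻¹ *ᵥ μ)
    (hc : c = one ⬝ᵥ S⁻¹ *ᵥ one)
    (wM : Fin k → ℝ)
    (hw : wM = ((a - μ0 * b) / (a * c - b ^ 2)) • (S⁻¹ *ᵥ one)
        + ((μ0 * c - b) / (a * c - b ^ 2)) • (S⁻¹ *ᵥ μ)) :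
    ∃ w : Fin k → ℝ, w ⬝ᵥ one = 1 ∧ w ⬝ᵥ S *ᵥ w = wM ⬝ᵥ S *ᵥ wM ∧
      wM ⬝ᵥ μ < w ⬝ᵥ μ := by
  have hone0 : one ≠ 0 := fun h => hμ ⟨0, funext fun i => by simpa [hone] using congrFun h i⟩
  subst ha hb hc
  have hwM : wM = frontierPortfolio S one μ μ0 := hw
  obtain ⟨-, hM⟩ := frontierPortfolio_dotProduct hS hone0 hμ μ0
  obtain ⟨h1, h2⟩ := frontierPortfolio_dotProduct hS hone0 hμ (2 * Rg - μ0)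
  refine ⟨frontierPortfolio S one μ (2 * Rg - μ0), h1, ?_, ?_⟩
  · rw [hwM, hRg]
    exact frontierPortfolio_variance_reflect hS hone0 hμ μ0
  · rw [hwM, hM, h2]
    linarith
end

section
/- Let Σ be a k×k symmetric positive definite matrix, μ ∈ ℝ^k, μ̃ = 𝟏 + μ, A = Σ + μ̃μ̃'. Then the GMV portfolio with respect to A satisfies A⁻¹𝟏/(𝟏'A⁻¹𝟏) = Σ⁻¹𝟏/(𝟏'Σ⁻¹𝟏) - ((1 + R_GMV)/(1 + s))·Qμ, where Q = Σ⁻¹ - (Σ⁻¹𝟏𝟏'Σ⁻¹)/(𝟏'Σ⁻¹𝟏), R_GMV = (𝟏'Σ⁻¹μ)/(𝟏'Σ⁻¹𝟏), s = μ'Qμ. -/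
/-!
Rather than expanding `A⁻¹` by Sherman–Morrison, we check the claimed vector `y` directly: a
vector with `𝟏'y = 1` and `Ay ∈ ℝ𝟏` must be `A⁻¹𝟏 / (𝟏'A⁻¹𝟏)`. Writing `z = μ - R_GMV 𝟏`, one has
`Qμ = Σ⁻¹z` and `𝟏'Σ⁻¹z = 0`, so `𝟏'y = 1`, and `s = z'Σ⁻¹z ≥ 0`. In `Ay` the coefficient of `μ` is
`(1 + R_GMV) - κ (1 + s)`, which vanishes for the factor `κ = (1 + R_GMV) / (1 + s)`.
-/

open Matrix

namespace Matrix

variable {K n : Type*} [Field K] [Fintype n]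

theorem sub_smul_vecMulVec_mulVec (P : Matrix n n K) (e μ : n → K) :
    (P - (e ⬝ᵥ P *ᵥ e)⁻¹ • vecMulVec (P *ᵥ e) (e ᵥ* P)) *ᵥ μ =
      P *ᵥ (μ - ((e ⬝ᵥ P *ᵥ μ) / (e ⬝ᵥ P *ᵥ e)) • e) := by
  rw [sub_mulVec, smul_mulVec, vecMulVec_mulVec, mulVec_sub, mulVec_smul, ← dotProduct_mulVec,
    op_smul_eq_smul, smul_smul, inv_mul_eq_div]

theorem dotProduct_mulVec_sub_div_smul_eq_zero (P : Matrix n n K) (e μ : n → K)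
    (he : e ⬝ᵥ P *ᵥ e ≠ 0) :
    e ⬝ᵥ P *ᵥ (μ - ((e ⬝ᵥ P *ᵥ μ) / (e ⬝ᵥ P *ᵥ e)) • e) = 0 := by
  rw [mulVec_sub, mulVec_smul, dotProduct_sub, dotProduct_smul, smul_eq_mul, div_mul_cancel₀ _ he,
    sub_self]

theorem dotProduct_mulVec_sub_div_smul_eq_self (P : Matrix n n K) (e μ : n → K)
    (he : e ⬝ᵥ P *ᵥ e ≠ 0) :
    μ ⬝ᵥ P *ᵥ (μ - ((e ⬝ᵥ P *ᵥ μ) / (e ⬝ᵥ P *ᵥ e)) • e) =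
      (μ - ((e ⬝ᵥ P *ᵥ μ) / (e ⬝ᵥ P *ᵥ e)) • e) ⬝ᵥ
        P *ᵥ (μ - ((e ⬝ᵥ P *ᵥ μ) / (e ⬝ᵥ P *ᵥ e)) • e) := by
  rw [sub_dotProduct _ _ (P *ᵥ _), smul_dotProduct, dotProduct_mulVec_sub_div_smul_eq_zero P e μ he,
    smul_zero, sub_zero]

variable [DecidableEq n]

noncomputable def gmvWeights (A : Matrix n n K) (e : n → K) : n → K :=
  (e ⬝ᵥ A⁻¹ *ᵥ e)⁻¹ • (A⁻¹ *ᵥ e)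

theorem gmvWeights_eq_of_mulVec_eq_smul {A : Matrix n n K} (hA : IsUnit A.det) {e y : n → K}
    {c : K} (hAy : A *ᵥ y = c • e) (hey : e ⬝ᵥ y = 1) : gmvWeights A e = y := by
  have hy : y = c • (A⁻¹ *ᵥ e) := by
    rw [← mulVec_smul, ← hAy, mulVec_mulVec, nonsing_inv_mul A hA, one_mulVec]
  have hc : (e ⬝ᵥ A⁻¹ *ᵥ e)⁻¹ = c := by
    rw [hy, dotProduct_smul, smul_eq_mul] at hey
    exact inv_eq_of_mul_eq_one_left hey
  rw [gmvWeights, hc, hy]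

theorem gmvWeights_add_vecMulVec {S : Matrix n n K} (hS : IsUnit S.det) (hSsymm : S.IsSymm)
    {e μ : n → K} (hA : IsUnit (S + vecMulVec (e + μ) (e + μ)).det) (he : e ⬝ᵥ S⁻¹ *ᵥ e ≠ 0)
    {R s : K} {z : n → K} (hR : R = (e ⬝ᵥ S⁻¹ *ᵥ μ) / (e ⬝ᵥ S⁻¹ *ᵥ e)) (hz : z = μ - R • e)
    (hs : s = μ ⬝ᵥ S⁻¹ *ᵥ z) (hs1 : 1 + s ≠ 0) :
    gmvWeights (S + vecMulVec (e + μ) (e + μ)) e =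
      gmvWeights S e - ((1 + R) / (1 + s)) • (S⁻¹ *ᵥ z) := by
  set a := e ⬝ᵥ S⁻¹ *ᵥ e
  set κ := (1 + R) / (1 + s)
  have hκ : κ * (1 + s) = 1 + R := div_mul_cancel₀ _ hs1
  have hez : e ⬝ᵥ S⁻¹ *ᵥ z = 0 := hz ▸ hR ▸ dotProduct_mulVec_sub_div_smul_eq_zero _ e μ he
  have hμe : μ ⬝ᵥ S⁻¹ *ᵥ e = R * a := by
    rw [dotProduct_mulVec, ← mulVec_transpose, hSsymm.inv.eq, dotProduct_comm, hR,
      div_mul_cancel₀ _ he]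
  have hSS : S * S⁻¹ = 1 := mul_nonsing_inv S hS
  refine gmvWeights_eq_of_mulVec_eq_smul hA (c := a⁻¹ + κ * R + (1 + R - κ * s)) ?_ ?_
  · rw [add_mulVec, vecMulVec_mulVec, op_smul_eq_smul, gmvWeights, mulVec_sub, mulVec_smul,
      mulVec_smul, mulVec_mulVec, mulVec_mulVec, hSS, one_mulVec, one_mulVec, dotProduct_sub,
      dotProduct_smul, dotProduct_smul, add_dotProduct, add_dotProduct, hez, hμe, ← hs, hz]
    ext i
    simp only [Pi.add_apply, Pi.sub_apply, Pi.smul_apply, smul_eq_mul]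
    linear_combination (-μ i) * hκ + (1 + R) * (e i + μ i) * inv_mul_cancel₀ he
  · rw [gmvWeights, dotProduct_sub, dotProduct_smul, dotProduct_smul, hez, smul_eq_mul,
      inv_mul_cancel₀ he, smul_zero, sub_zero]

end Matrix

theorem stmt18 {k : ℕ} (S : Matrix (Fin k) (Fin k) ℝ) (hS : S.PosDef)
    (one : Fin k → ℝ) (hone : one = fun _ => (1:ℝ))
    (μ : Fin k → ℝ) (A : Matrix (Fin k) (Fin k) ℝ)
    (hA : A = S + vecMulVec (one + μ) (one + μ))
    (Q : Matrix (Fin k) (Fin k) ℝ)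
    (hQ : Q = S⁻¹ - (one ⬝ᵥ S⁻¹ *ᵥ one)⁻¹ • vecMulVec (S⁻¹ *ᵥ one) (one ᵥ* S⁻¹))
    (Rg s : ℝ)
    (hRg : Rg = (one ⬝ᵥ S⁻¹ *ᵥ μ) / (one ⬝ᵥ S⁻¹ *ᵥ one))
    (hs : s = μ ⬝ᵥ Q *ᵥ μ) :
    (one ⬝ᵥ A⁻¹ *ᵥ one)⁻¹ • (A⁻¹ *ᵥ one) =
      (one ⬝ᵥ S⁻¹ *ᵥ one)⁻¹ • (S⁻¹ *ᵥ one) - ((1 + Rg) / (1 + s)) • (Q *ᵥ μ) := by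
  rcases isEmpty_or_nonempty (Fin k) with _ | ⟨⟨i⟩⟩
  · exact Subsingleton.elim _ _
  have hone0 : one ≠ 0 := fun h => by simpa [hone] using congrFun h i
  have ha : one ⬝ᵥ S⁻¹ *ᵥ one ≠ 0 := by simpa using (hS.inv.dotProduct_mulVec_pos hone0).ne'
  have hQμ : Q *ᵥ μ = S⁻¹ *ᵥ (μ - Rg • one) := by rw [hQ, sub_smul_vecMulVec_mulVec, hRg]
  rw [hQμ] at hs ⊢
  have hs0 : 0 ≤ s := by
    rw [hs, hRg, dotProduct_mulVec_sub_div_smul_eq_self _ _ _ ha]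
    simpa only [star_trivial] using hS.inv.posSemidef.dotProduct_mulVec_nonneg _
  have hApd : A.PosDef :=
    hA ▸ hS.add_posSemidef (by simpa using posSemidef_vecMulVec_self_star (one + μ))
  subst hA
  exact gmvWeights_add_vecMulVec ((isUnit_iff_isUnit_det S).1 hS.isUnit)
    (isHermitian_iff_isSymm.1 hS.isHermitian) ((isUnit_iff_isUnit_det _).1 hApd.isUnit) ha hRg rfl
    hs (by linarith)
end

section
/- Let Σ be a k×k symmetric positive definite matrix, μ ∈ ℝ^k not proportional to 𝟏, μ̃ = 𝟏 + μ, A = Σ + μ̃μ̃', and α̃ > 0 with α̃⁻¹ > 1 + R_GMV. Then the solution w_QU = A⁻¹𝟏/(𝟏'A⁻¹𝟏) + α̃⁻¹(A⁻¹ - (A⁻¹𝟏𝟏'A⁻¹)/(𝟏'A⁻¹𝟏))μ̃ of the quadratic utility problem equals the maximizer of w'μ - (α/2)w'Σw over {w : w'𝟏 = 1} with α = (1 + s)/(α̃⁻¹ - 1 - R_GMV) > 0. -/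
/-!
The QU weights satisfy the budget constraint and the first-order condition
`A w = c 𝟏 + α̃⁻¹ μ̃`; removing the rank-one part of `A` gives `Σ w = (c + β) 𝟏 + β μ` with
`β = α̃⁻¹ - μ̃'w`. Every budget portfolio with `Σ w ∈ span(𝟏, μ)` has mean `R_GMV + β s`, so
`β = α̃⁻¹ - 1 - R_GMV - β s`, i.e. `β = 1 / α`. Thus `Σ w = c' 𝟏 + α⁻¹ μ`, which is the
first-order condition of the MVU problem, and its objective is strictly concave on the budget
hyperplane.
-/

open Matrix

namespace Matrix

variable {ι : Type*} [Fintype ι]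

lemma vecMulVec_mulVec_eq_smul {R : Type*} [CommSemiring R] (a b x : ι → R) :
    vecMulVec a b *ᵥ x = (b ⬝ᵥ x) • a := by
  simp [vecMulVec_mulVec]

lemma IsSymm.dotProduct_mulVec_comm {R : Type*} [CommSemiring R] {M : Matrix ι ι R}
    (hM : M.IsSymm) (u v : ι → R) : u ⬝ᵥ M *ᵥ v = v ⬝ᵥ M *ᵥ u := by
  rw [dotProduct_mulVec, ← mulVec_transpose, hM.eq, dotProduct_comm]

lemma nonsing_inv_mulVec_mulVec [DecidableEq ι] {R : Type*} [CommRing R] {M : Matrix ι ι R}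
    (hM : IsUnit M.det) (v : ι → R) : M⁻¹ *ᵥ (M *ᵥ v) = v := by
  rw [mulVec_mulVec, nonsing_inv_mul _ hM, one_mulVec]

lemma mulVec_nonsing_inv_mulVec [DecidableEq ι] {R : Type*} [CommRing R] {M : Matrix ι ι R}
    (hM : IsUnit M.det) (v : ι → R) : M *ᵥ (M⁻¹ *ᵥ v) = v := by
  rw [mulVec_mulVec, mul_nonsing_inv _ hM, one_mulVec]

lemma dotProduct_mulVec_sub_smul_div_eq_zero {K : Type*} [Field K] (B : Matrix ι ι K)
    {one : ι → K} (μ : ι → K) (h : one ⬝ᵥ B *ᵥ one ≠ 0) :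
    one ⬝ᵥ B *ᵥ (μ - ((one ⬝ᵥ B *ᵥ μ) / (one ⬝ᵥ B *ᵥ one)) • one) = 0 := by
  rw [mulVec_sub, mulVec_smul, dotProduct_sub, dotProduct_smul, smul_eq_mul,
    div_mul_cancel₀ _ h, sub_self]

lemma dotProduct_eq_mul_of_mulVec_eq_smul_add_smul [DecidableEq ι] {R : Type*} [CommRing R]
    {S : Matrix ι ι R} (hS : S.IsSymm) (hSdet : IsUnit S.det) {one u w : ι → R} {c β : R}
    (hu : one ⬝ᵥ S⁻¹ *ᵥ u = 0) (hSw : S *ᵥ w = c • one + β • u) :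
    u ⬝ᵥ w = β * (u ⬝ᵥ S⁻¹ *ᵥ u) := by
  calc u ⬝ᵥ w = u ⬝ᵥ S⁻¹ *ᵥ (S *ᵥ w) := by rw [nonsing_inv_mulVec_mulVec hSdet]
    _ = β * (u ⬝ᵥ S⁻¹ *ᵥ u) := by
      rw [hSw, mulVec_add, mulVec_smul, mulVec_smul, dotProduct_add, dotProduct_smul,
        dotProduct_smul, hS.inv.dotProduct_mulVec_comm u one, hu, smul_zero, zero_add,
        smul_eq_mul]

lemma dotProduct_sub_smul_vecMulVec_mulVec {K : Type*} [Field K] {B : Matrix ι ι K}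
    (hB : B.IsSymm) (one μ : ι → K) (h : one ⬝ᵥ B *ᵥ one ≠ 0) :
    μ ⬝ᵥ (B - (one ⬝ᵥ B *ᵥ one)⁻¹ • vecMulVec (B *ᵥ one) (one ᵥ* B)) *ᵥ μ
      = (μ - ((one ⬝ᵥ B *ᵥ μ) / (one ⬝ᵥ B *ᵥ one)) • one)
        ⬝ᵥ B *ᵥ (μ - ((one ⬝ᵥ B *ᵥ μ) / (one ⬝ᵥ B *ᵥ one)) • one) := by
  simp only [sub_mulVec, smul_mulVec, vecMulVec_mulVec_eq_smul, ← dotProduct_mulVec, mulVec_sub,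
    mulVec_smul, dotProduct_sub, sub_dotProduct, dotProduct_smul, smul_dotProduct, smul_eq_mul,
    hB.dotProduct_mulVec_comm μ one]
  field_simp
  ring

lemma PosDef.dotProduct_inv_mulVec_self_ne_zero [DecidableEq ι] {S : Matrix ι ι ℝ}
    (hS : S.PosDef) {x : ι → ℝ} (hx : x ≠ 0) : x ⬝ᵥ S⁻¹ *ᵥ x ≠ 0 := by
  simpa using (hS.inv.dotProduct_mulVec_pos hx).ne'

lemma PosDef.dotProduct_eq_div_add_mul_of_mulVec_eq [DecidableEq ι] {S : Matrix ι ι ℝ}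
    (hS : S.PosDef) {one μ w : ι → ℝ} (hone : one ≠ 0) {c β : ℝ}
    (hSw : S *ᵥ w = c • one + β • μ) (hw : w ⬝ᵥ one = 1) :
    w ⬝ᵥ μ = (one ⬝ᵥ S⁻¹ *ᵥ μ) / (one ⬝ᵥ S⁻¹ *ᵥ one)
      + β * (μ ⬝ᵥ (S⁻¹ - (one ⬝ᵥ S⁻¹ *ᵥ one)⁻¹ • vecMulVec (S⁻¹ *ᵥ one) (one ᵥ* S⁻¹)) *ᵥ μ) := by
  have hSsymm : S.IsSymm := isHermitian_iff_isSymm.mp hS.isHermitian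
  have ha := hS.dotProduct_inv_mulVec_self_ne_zero hone
  set r := (one ⬝ᵥ S⁻¹ *ᵥ μ) / (one ⬝ᵥ S⁻¹ *ᵥ one)
  have hSw' : S *ᵥ w = (c + β * r) • one + β • (μ - r • one) := by rw [hSw]; module
  have hcentered := dotProduct_eq_mul_of_mulVec_eq_smul_add_smul hSsymm hS.det_pos.ne'.isUnit
    (dotProduct_mulVec_sub_smul_div_eq_zero _ μ ha) hSw'
  rw [dotProduct_sub_smul_vecMulVec_mulVec hSsymm.inv one μ ha, ← hcentered, sub_dotProduct,
    smul_dotProduct, dotProduct_comm one w, hw, dotProduct_comm μ w, smul_eq_mul, mul_one,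
    add_sub_cancel]

lemma PosDef.dotProduct_sub_smul_vecMulVec_inv_mulVec_nonneg [DecidableEq ι]
    {S : Matrix ι ι ℝ} (hS : S.PosDef) {one : ι → ℝ} (hone : one ≠ 0) (μ : ι → ℝ) :
    0 ≤ μ ⬝ᵥ (S⁻¹ - (one ⬝ᵥ S⁻¹ *ᵥ one)⁻¹ • vecMulVec (S⁻¹ *ᵥ one) (one ᵥ* S⁻¹)) *ᵥ μ := by
  have ha := hS.dotProduct_inv_mulVec_self_ne_zero hone
  rw [dotProduct_sub_smul_vecMulVec_mulVec
    (isHermitian_iff_isSymm.mp hS.isHermitian).inv one μ ha]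
  exact hS.inv.posSemidef.dotProduct_mulVec_nonneg _

end Matrix

section Portfolio

variable {ι : Type*} [Fintype ι]

noncomputable def meanVarianceUtility (μ : ι → ℝ) (α : ℝ) (S : Matrix ι ι ℝ) (w : ι → ℝ) : ℝ :=
  w ⬝ᵥ μ - α / 2 * (w ⬝ᵥ S *ᵥ w)

/-- The QU solution `w_QU` with `A`, `𝟏 = one`, `μ̃ = b` and `α̃⁻¹ = γ`. -/
noncomputable def quWeights [DecidableEq ι] (A : Matrix ι ι ℝ) (one b : ι → ℝ) (γ : ℝ) : ι → ℝ :=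
  (one ⬝ᵥ A⁻¹ *ᵥ one)⁻¹ • (A⁻¹ *ᵥ one)
    + γ • ((A⁻¹ - (one ⬝ᵥ A⁻¹ *ᵥ one)⁻¹ • vecMulVec (A⁻¹ *ᵥ one) (one ᵥ* A⁻¹)) *ᵥ b)

lemma quWeights_dotProduct [DecidableEq ι] (A : Matrix ι ι ℝ) {one : ι → ℝ} (b : ι → ℝ) (γ : ℝ)
    (h : one ⬝ᵥ A⁻¹ *ᵥ one ≠ 0) : quWeights A one b γ ⬝ᵥ one = 1 := by
  simp only [quWeights, sub_mulVec, smul_mulVec, vecMulVec_mulVec_eq_smul, ← dotProduct_mulVec,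
    add_dotProduct, smul_dotProduct, sub_dotProduct, smul_eq_mul]
  rw [dotProduct_comm (A⁻¹ *ᵥ one), dotProduct_comm (A⁻¹ *ᵥ b)]
  field_simp
  ring

lemma mulVec_quWeights [DecidableEq ι] {A : Matrix ι ι ℝ} (hA : IsUnit A.det)
    (one b : ι → ℝ) (γ : ℝ) :
    ∃ c : ℝ, A *ᵥ quWeights A one b γ = c • one + γ • b := by
  refine ⟨(one ⬝ᵥ A⁻¹ *ᵥ one)⁻¹ * (1 - γ * (one ⬝ᵥ A⁻¹ *ᵥ b)), ?_⟩
  simp only [quWeights, sub_mulVec, smul_mulVec, vecMulVec_mulVec_eq_smul, mulVec_add,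
    mulVec_smul, mulVec_sub, mulVec_nonsing_inv_mulVec hA, ← dotProduct_mulVec]
  module

lemma meanVarianceUtility_lt_of_mulVec_eq {S : Matrix ι ι ℝ} (hS : S.PosDef)
    {one μ w v : ι → ℝ} {α c : ℝ} (hα : 0 < α) (hSw : S *ᵥ w = c • one + α⁻¹ • μ)
    (hv : v ⬝ᵥ one = w ⬝ᵥ one) (hne : v ≠ w) :
    meanVarianceUtility μ α S v < meanVarianceUtility μ α S w := by
  obtain ⟨e, rfl⟩ : ∃ e, v = w + e := ⟨v - w, by abel⟩
  have he : e ≠ 0 := fun h => hne (by simp [h])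
  have he1 : e ⬝ᵥ one = 0 := by simpa [add_dotProduct] using hv
  have hSsymm : S.IsSymm := isHermitian_iff_isSymm.mp hS.isHermitian
  have hcross : α * (w ⬝ᵥ S *ᵥ e) = e ⬝ᵥ μ := by
    rw [hSsymm.dotProduct_mulVec_comm, hSw, dotProduct_add, dotProduct_smul, dotProduct_smul,
      he1, smul_eq_mul, smul_eq_mul]
    field_simp
    ring
  have hpos : 0 < α * (e ⬝ᵥ S *ᵥ e) := mul_pos hα (hS.dotProduct_mulVec_pos he)
  simp only [meanVarianceUtility, mulVec_add, dotProduct_add, add_dotProduct,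
    hSsymm.dotProduct_mulVec_comm e w]
  linarith

end Portfolio

theorem stmt19_general {k : ℕ} (S : Matrix (Fin k) (Fin k) ℝ) (hS : S.PosDef)
    (one : Fin k → ℝ) (hone : one = fun _ => (1:ℝ))
    (μ : Fin k → ℝ) (hμ : ¬ ∃ t : ℝ, μ = t • one)
    (A : Matrix (Fin k) (Fin k) ℝ)
    (hA : A = S + vecMulVec (one + μ) (one + μ))
    (Q : Matrix (Fin k) (Fin k) ℝ)
    (hQ : Q = S⁻¹ - (one ⬝ᵥ S⁻¹ *ᵥ one)⁻¹ • vecMulVec (S⁻¹ *ᵥ one) (one ᵥ* S⁻¹))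
    (Rg s : ℝ)
    (hRg : Rg = (one ⬝ᵥ S⁻¹ *ᵥ μ) / (one ⬝ᵥ S⁻¹ *ᵥ one))
    (hs : s = μ ⬝ᵥ Q *ᵥ μ)
    (αt : ℝ) (hαt2 : αt⁻¹ > 1 + Rg)
    (α : ℝ) (hα : α = (1 + s) / (αt⁻¹ - 1 - Rg))
    (wQU : Fin k → ℝ)
    (hw : wQU = (one ⬝ᵥ A⁻¹ *ᵥ one)⁻¹ • (A⁻¹ *ᵥ one)
        + αt⁻¹ • ((A⁻¹ - (one ⬝ᵥ A⁻¹ *ᵥ one)⁻¹ • vecMulVec (A⁻¹ *ᵥ one) (one ᵥ* A⁻¹)) *ᵥ (one + μ))) :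
    0 < α ∧ wQU ⬝ᵥ one = 1 ∧
    ∀ v : Fin k → ℝ, v ⬝ᵥ one = 1 → v ≠ wQU →
      v ⬝ᵥ μ - α / 2 * (v ⬝ᵥ S *ᵥ v) < wQU ⬝ᵥ μ - α / 2 * (wQU ⬝ᵥ S *ᵥ wQU) := by
  have hone0 : one ≠ 0 := fun h =>
    hμ ⟨0, funext fun i => absurd (congrFun (hone ▸ h) i) one_ne_zero⟩
  have hApd : A.PosDef :=
    hA ▸ hS.add_posSemidef (star_trivial (one + μ) ▸ posSemidef_vecMulVec_self_star _)
  have hw' : wQU = quWeights A one (one + μ) αt⁻¹ := hw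
  have hw1 : wQU ⬝ᵥ one = 1 :=
    hw' ▸ quWeights_dotProduct A _ _ (hApd.dotProduct_inv_mulVec_self_ne_zero hone0)
  obtain ⟨c, hAw⟩ := mulVec_quWeights hApd.det_pos.ne'.isUnit one (one + μ) αt⁻¹
  rw [← hw'] at hAw
  set β := αt⁻¹ - (one + μ) ⬝ᵥ wQU with hβ
  have hSw : S *ᵥ wQU = (c + β) • one + β • μ := by
    have : S *ᵥ wQU = A *ᵥ wQU - ((one + μ) ⬝ᵥ wQU) • (one + μ) := by
      rw [hA, add_mulVec, vecMulVec_mulVec_eq_smul]; abel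
    rw [this, hAw]; module
  have hmean : wQU ⬝ᵥ μ = Rg + β * s := by
    rw [hRg, hs, hQ]; exact hS.dotProduct_eq_div_add_mul_of_mulVec_eq hone0 hSw hw1
  have hs0 : 0 ≤ s := hs ▸ hQ ▸ hS.dotProduct_sub_smul_vecMulVec_inv_mulVec_nonneg hone0 μ
  have hα0 : 0 < α := hα ▸ div_pos (by linarith) (by linarith)
  have hβα : β = α⁻¹ := by
    have hdot : (one + μ) ⬝ᵥ wQU = 1 + wQU ⬝ᵥ μ := by
      rw [add_dotProduct, dotProduct_comm one, hw1, dotProduct_comm]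
    rw [hα, inv_div, eq_div_iff (by linarith)]
    linear_combination hβ - hdot - hmean
  exact ⟨hα0, hw1, fun v hv hne =>
    meanVarianceUtility_lt_of_mulVec_eq hS hα0 (hβα ▸ hSw) (hv.trans hw1.symm) hne⟩

theorem stmt19 {k : ℕ} (S : Matrix (Fin k) (Fin k) ℝ) (hS : S.PosDef)
    (one : Fin k → ℝ) (hone : one = fun _ => (1:ℝ))
    (μ : Fin k → ℝ) (hμ : ¬ ∃ t : ℝ, μ = t • one)
    (A : Matrix (Fin k) (Fin k) ℝ)
    (hA : A = S + vecMulVec (one + μ) (one + μ))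
    (Q : Matrix (Fin k) (Fin k) ℝ)
    (hQ : Q = S⁻¹ - (one ⬝ᵥ S⁻¹ *ᵥ one)⁻¹ • vecMulVec (S⁻¹ *ᵥ one) (one ᵥ* S⁻¹))
    (Rg s : ℝ)
    (hRg : Rg = (one ⬝ᵥ S⁻¹ *ᵥ μ) / (one ⬝ᵥ S⁻¹ *ᵥ one))
    (hs : s = μ ⬝ᵥ Q *ᵥ μ)
    (αt : ℝ) (hαt : 0 < αt) (hαt2 : αt⁻¹ > 1 + Rg)
    (α : ℝ) (hα : α = (1 + s) / (αt⁻¹ - 1 - Rg))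
    (wQU : Fin k → ℝ)
    (hw : wQU = (one ⬝ᵥ A⁻¹ *ᵥ one)⁻¹ • (A⁻¹ *ᵥ one)
        + αt⁻¹ • ((A⁻¹ - (one ⬝ᵥ A⁻¹ *ᵥ one)⁻¹ • vecMulVec (A⁻¹ *ᵥ one) (one ᵥ* A⁻¹)) *ᵥ (one + μ))) :
    0 < α ∧ wQU ⬝ᵥ one = 1 ∧
    ∀ v : Fin k → ℝ, v ⬝ᵥ one = 1 → v ≠ wQU →
      v ⬝ᵥ μ - α / 2 * (v ⬝ᵥ S *ᵥ v) < wQU ⬝ᵥ μ - α / 2 * (wQU ⬝ᵥ S *ᵥ wQU) :=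
  stmt19_general S hS one hone μ hμ A hA Q hQ Rg s hRg hs αt hαt2 α hα wQU hw
end
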